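/- For every integer s ≥ 2, ζ(s) = 2^s/(2^s - 1) · β(s) + (-1)^s · 2/(2^s(2^s - 1)) · ψ^(s-1)(3/4) / Γ(s). -/

import Mathlib

open Real

/-- The `k`-th polygamma function: the `(k+1)`-st derivative of `log ∘ Γ`. -/
noncomputable def polygamma (k : ℕ) (x : ℝ) : ℝ :=
  iteratedDeriv (k + 1) (fun y => Real.log (Real.Gamma y)) x

/-- The Dirichlet beta function `β(s) = ∑_{k≥1} (-1)^(k-1)/(2k-1)^s`. -/
noncomputable def dirichletBeta (s : ℕ) : ℝ :=
  ∑' k : ℕ, (-1 : ℝ) ^ k / (2 * (k : ℝ) + 1) ^ s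

/-- The Riemann zeta function for integer arguments `s ≥ 2`, as `∑_{n≥1} 1/n^s`. -/
noncomputable def zetaInt (s : ℕ) : ℝ :=
  ∑' n : ℕ, 1 / ((n : ℝ) + 1) ^ s

/-!
Splitting `∑ₘ 1/(m+x)^s` over even and odd `m` gives, for the real Hurwitz zeta function,
`ζ(s,x) = 2⁻ˢ (ζ(s,x/2) + ζ(s,(x+1)/2))`. At `x = 1` and `x = 1/2` this yields
`(1 - 2⁻ˢ) ζ(s) = 4⁻ˢ (ζ(s,1/4) + ζ(s,3/4))`, while the alternating split of `β` gives
`β(s) = 4⁻ˢ (ζ(s,1/4) - ζ(s,3/4))`. Hence `(1 - 2⁻ˢ) ζ(s) - β(s) = 2·4⁻ˢ ζ(s,3/4)`, which is the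
polygamma term by `ψ⁽ᵏ⁾(x) = (-1)ᵏ⁺¹ k! ζ(k+1,x)`. That formula comes from differentiating the
Euler limit `log Γ(x) = lim (x log n + log n! - ∑_{m ≤ n} log (x+m))` once, the derivatives
converging uniformly to the series `ψ(x) = -γ - 1/x + ∑ (1/(m+1) - 1/(m+1+x))`, and then
differentiating termwise.
-/

open Filter Topology Set
open scoped Nat

noncomputable def realHurwitzZeta (k : ℕ) (x : ℝ) : ℝ :=
  ∑' m : ℕ, 1 / ((m : ℝ) + x) ^ k

theorem summable_one_div_nat_add_pow {k : ℕ} (hk : 2 ≤ k) (x : ℝ) :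
    Summable fun m : ℕ => 1 / ((m : ℝ) + x) ^ k := by
  refine Summable.of_norm <|
    ((Real.summable_one_div_nat_add_rpow x k).2 (by exact_mod_cast hk)).congr fun m => ?_
  rw [Real.rpow_natCast, norm_div, norm_one, norm_pow, Real.norm_eq_abs]

theorem hasDerivAt_one_div_add_pow (a : ℝ) (k : ℕ) {y : ℝ} (hy : a + y ≠ 0) :
    HasDerivAt (fun y => 1 / (a + y) ^ k) (-k * (1 / (a + y) ^ (k + 1))) y := by
  have h := (hasDerivAt_zpow (-(k : ℤ)) (a + y) (Or.inl hy)).comp_const_add a y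
  rw [show -(k : ℤ) - 1 = -((k + 1 : ℕ) : ℤ) by push_cast; ring] at h
  simpa only [zpow_neg, zpow_natCast, one_div, Int.cast_neg, Int.cast_natCast, neg_mul] using h

theorem hasDerivAt_realHurwitzZeta {k : ℕ} (hk : 2 ≤ k) {x : ℝ} (hx : 0 < x) :
    HasDerivAt (realHurwitzZeta k) (-k * realHurwitzZeta (k + 1) x) x := by
  have hpos {y : ℝ} (hy : y ∈ Ioi (x / 2)) (m : ℕ) : 0 < (m : ℝ) + y := by
    have : 0 < y := lt_trans (by positivity) hy
    positivity
  rw [realHurwitzZeta, ← tsum_mul_left]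
  refine hasDerivAt_tsum_of_isPreconnected
    ((summable_one_div_nat_add_pow (by omega : 2 ≤ k + 1) (x / 2)).mul_left (k : ℝ))
    isOpen_Ioi isPreconnected_Ioi (fun m y hy => hasDerivAt_one_div_add_pow _ _ (hpos hy m).ne')
    (fun m y hy => ?_) (mem_Ioi.2 (half_lt_self hx)) (summable_one_div_nat_add_pow hk x)
    (mem_Ioi.2 (half_lt_self hx))
  rw [norm_mul, norm_neg, Real.norm_natCast, Real.norm_of_nonneg (by have := hpos hy m; positivity)]
  gcongr
  exact (mem_Ioi.1 hy).le

noncomputable def digammaSeries (x : ℝ) : ℝ :=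
  -eulerMascheroniConstant - 1 / x + ∑' m : ℕ, (1 / ((m : ℝ) + 1) - 1 / ((m : ℝ) + 1 + x))

theorem abs_one_div_sub_one_div_add_le {a y : ℝ} (ha : 0 < a) (hy : 0 ≤ y) :
    |1 / a - 1 / (a + y)| ≤ y * (1 / a ^ 2) := by
  have hdiff : 1 / a - 1 / (a + y) = y / (a * (a + y)) := by field_simp; ring
  rw [hdiff, abs_of_nonneg (by positivity), mul_one_div, sq]
  gcongr
  linarith

theorem tendstoUniformlyOn_deriv_logGammaSeq (b : ℝ) :
    TendstoUniformlyOn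
      (fun (n : ℕ) (y : ℝ) => log n - ∑ m ∈ Finset.range (n + 1), 1 / (y + m))
      digammaSeries atTop (Ioo 0 b) := by
  have hγ : Tendsto (fun n : ℕ => log n - (harmonic n : ℝ)) atTop
      (𝓝 (-eulerMascheroniConstant)) := by
    simpa using tendsto_harmonic_sub_log.neg
  have hseries := tendstoUniformlyOn_tsum_nat (s := Ioo 0 b)
    (f := fun m y => 1 / ((m : ℝ) + 1) - 1 / ((m : ℝ) + 1 + y))
    ((summable_one_div_nat_add_pow le_rfl 1).mul_left b) fun m y (hy : y ∈ Ioo 0 b) =>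
      (abs_one_div_sub_one_div_add_le (a := (m : ℝ) + 1) (by positivity) hy.1.le).trans
        (mul_le_mul_of_nonneg_right hy.2.le (by positivity))
  have hinv :
      TendstoUniformlyOn (fun (_ : ℕ) (y : ℝ) => 1 / y) (fun y => 1 / y) atTop (Ioo 0 b) :=
    fun u hu => Eventually.of_forall fun _ _ _ => refl_mem_uniformity hu
  refine (((hγ.tendstoUniformlyOn_const _).sub hinv).add hseries).congr ?_
  refine Eventually.of_forall fun n y _ => ?_
  simp only [Pi.add_apply, Pi.sub_apply, harmonic, Finset.sum_sub_distrib,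
    Finset.sum_range_succ' _ n]
  push_cast
  simp only [one_div, add_comm y]
  ring

theorem hasDerivAt_logGammaSeq (n : ℕ) {y : ℝ} (hy : 0 < y) :
    HasDerivAt (fun x => BohrMollerup.logGammaSeq x n)
      (log n - ∑ m ∈ Finset.range (n + 1), 1 / (y + m)) y := by
  have hlog : HasDerivAt (fun x => ∑ m ∈ Finset.range (n + 1), log (x + m))
      (∑ m ∈ Finset.range (n + 1), 1 / (y + m)) y :=
    HasDerivAt.fun_sum fun m _ => by
      simpa using ((hasDerivAt_id y).add_const (m : ℝ)).log (by positivity)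
  have h := (((hasDerivAt_id y).mul_const (log n)).add_const (log n !)).fun_sub hlog
  rwa [one_mul] at h

theorem hasDerivAt_log_Gamma {x : ℝ} (hx : 0 < x) :
    HasDerivAt (fun y => log (Gamma y)) (digammaSeries x) x :=
  hasDerivAt_of_tendstoUniformlyOn isOpen_Ioo (tendstoUniformlyOn_deriv_logGammaSeq (x + 1))
    (Eventually.of_forall fun n y hy => hasDerivAt_logGammaSeq n hy.1)
    (fun y hy => BohrMollerup.tendsto_log_gamma hy.1) ⟨hx, by linarith⟩

theorem realHurwitzZeta_eq_add_tsum {k : ℕ} (hk : 2 ≤ k) (x : ℝ) :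
    realHurwitzZeta k x = 1 / x ^ k + ∑' m : ℕ, 1 / ((m : ℝ) + 1 + x) ^ k := by
  rw [realHurwitzZeta, (summable_one_div_nat_add_pow hk x).tsum_eq_zero_add]
  push_cast
  simp_rw [zero_add]

theorem hasDerivAt_digammaSeries {x : ℝ} (hx : 0 < x) :
    HasDerivAt digammaSeries (realHurwitzZeta 2 x) x := by
  have hterm (m : ℕ) {y : ℝ} (hy : 0 < y) :
      HasDerivAt (fun y => 1 / ((m : ℝ) + 1) - 1 / ((m : ℝ) + 1 + y))
        (1 / ((m : ℝ) + 1 + y) ^ 2) y := by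
    have h := hasDerivAt_one_div_add_pow ((m : ℝ) + 1) 1 (by positivity : (m : ℝ) + 1 + y ≠ 0)
    simpa using h.const_sub (1 / ((m : ℝ) + 1))
  have hseries := hasDerivAt_tsum_of_isPreconnected (summable_one_div_nat_add_pow le_rfl 1)
    isOpen_Ioi isPreconnected_Ioi (fun m y (hy : y ∈ Ioi 0) => hterm m hy) (fun m y hy => ?_) hx
    (((summable_one_div_nat_add_pow le_rfl 1).mul_left x).of_norm_bounded fun m =>
      abs_one_div_sub_one_div_add_le (by positivity) hx.le) hx
  · have hinv : HasDerivAt (fun y => -eulerMascheroniConstant - 1 / y) (1 / x ^ 2) x := by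
      simpa using (hasDerivAt_inv hx.ne').const_sub (-eulerMascheroniConstant)
    rw [realHurwitzZeta_eq_add_tsum le_rfl]
    exact hinv.add hseries
  · rw [Real.norm_of_nonneg (by positivity)]
    exact one_div_le_one_div_of_le (by positivity)
      (pow_le_pow_left₀ (by positivity) (le_add_of_nonneg_right (le_of_lt hy)) 2)

theorem polygamma_succ (k : ℕ) : polygamma (k + 1) = deriv (polygamma k) := by
  ext x
  rw [polygamma, iteratedDeriv_succ]
  rfl

theorem polygamma_zero_eqOn_digammaSeries : EqOn (polygamma 0) digammaSeries (Ioi 0) :=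
  fun x hx => by rw [polygamma, iteratedDeriv_one, (hasDerivAt_log_Gamma hx).deriv]

theorem polygamma_eq_realHurwitzZeta {k : ℕ} (hk : 1 ≤ k) {x : ℝ} (hx : 0 < x) :
    polygamma k x = (-1) ^ (k + 1) * k ! * realHurwitzZeta (k + 1) x := by
  induction k, hk using Nat.le_induction generalizing x with
  | base =>
    rw [polygamma_succ, (polygamma_zero_eqOn_digammaSeries.eventuallyEq_of_mem
      (isOpen_Ioi.mem_nhds hx)).deriv_eq, (hasDerivAt_digammaSeries hx).deriv]
    norm_num
  | succ k hk ih =>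
    have hnear :
        polygamma k =ᶠ[𝓝 x] fun y => (-1) ^ (k + 1) * k ! * realHurwitzZeta (k + 1) y :=
      eventually_of_mem (isOpen_Ioi.mem_nhds hx) fun y hy => ih hy
    rw [polygamma_succ, hnear.deriv_eq,
      ((hasDerivAt_realHurwitzZeta (by omega) hx).const_mul _).deriv, Nat.factorial_succ]
    push_cast
    ring

theorem one_div_mul_add_pow {c : ℝ} (hc : c ≠ 0) (a y : ℝ) (k : ℕ) :
    1 / (c * y + a) ^ k = 1 / (y + a / c) ^ k / c ^ k := by
  rw [div_div, ← mul_pow, add_mul, div_mul_cancel₀ a hc, mul_comm y]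

theorem tsum_one_div_mul_nat_add_pow {c : ℝ} (hc : c ≠ 0) (a : ℝ) (k : ℕ) :
    ∑' m : ℕ, 1 / (c * m + a) ^ k = realHurwitzZeta k (a / c) / c ^ k := by
  simp_rw [one_div_mul_add_pow hc, tsum_div_const, realHurwitzZeta]

theorem tsum_eq_even_add_odd {f : ℕ → ℝ} (hf : Summable f) :
    ∑' n, f n = ∑' j, f (2 * j) + ∑' j, f (2 * j + 1) :=
  (tsum_even_add_odd (hf.comp_injective (mul_right_injective₀ two_ne_zero))
    (hf.comp_injective fun _ _ h => by simpa using h)).symm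

theorem tsum_neg_one_pow_mul_eq_sub {f : ℕ → ℝ} (hf : Summable f) :
    ∑' n, (-1) ^ n * f n = ∑' j, f (2 * j) - ∑' j, f (2 * j + 1) := by
  have hsign : Summable fun n => (-1 : ℝ) ^ n * f n :=
    hf.norm.of_norm_bounded fun n => by simp
  simp [tsum_eq_even_add_odd hsign, pow_succ, pow_mul, tsum_neg, sub_eq_add_neg]

theorem realHurwitzZeta_eq_add_div_two_pow {k : ℕ} (hk : 2 ≤ k) (x : ℝ) :
    realHurwitzZeta k x =
      (realHurwitzZeta k (x / 2) + realHurwitzZeta k ((x + 1) / 2)) / 2 ^ k := by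
  rw [realHurwitzZeta, tsum_eq_even_add_odd (summable_one_div_nat_add_pow hk x), add_div,
    ← tsum_one_div_mul_nat_add_pow two_ne_zero, ← tsum_one_div_mul_nat_add_pow two_ne_zero]
  push_cast
  simp_rw [add_assoc, add_comm 1 x]

theorem dirichletBeta_eq_sub {s : ℕ} (hs : 2 ≤ s) :
    dirichletBeta s = (realHurwitzZeta s (1 / 4) - realHurwitzZeta s (3 / 4)) / 4 ^ s := by
  have hodd : Summable fun k : ℕ => 1 / (2 * (k : ℝ) + 1) ^ s := by
    simp_rw [one_div_mul_add_pow two_ne_zero]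
    exact (summable_one_div_nat_add_pow hs _).div_const _
  rw [dirichletBeta, tsum_congr fun k => div_eq_mul_one_div _ _, tsum_neg_one_pow_mul_eq_sub hodd,
    sub_div, ← tsum_one_div_mul_nat_add_pow four_ne_zero,
    ← tsum_one_div_mul_nat_add_pow four_ne_zero]
  push_cast
  congr 1 <;> exact tsum_congr fun j => by ring_nf

theorem zeta_eq_beta_add_polygamma (s : ℕ) (hs : 2 ≤ s) :
    zetaInt s = 2 ^ s / (2 ^ s - 1) * dirichletBeta s +
      (-1 : ℝ) ^ s * (2 / (2 ^ s * (2 ^ s - 1))) * polygamma (s - 1) (3/4) / Real.Gamma s := by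
  obtain ⟨k, rfl⟩ : ∃ k, s = k + 1 := ⟨s - 1, by omega⟩
  have hζ : zetaInt (k + 1) = realHurwitzZeta (k + 1) 1 := rfl
  have hζ1 := realHurwitzZeta_eq_add_div_two_pow hs 1
  have hζhalf := realHurwitzZeta_eq_add_div_two_pow hs (1 / 2)
  norm_num at hζ1 hζhalf
  have hΓ : Gamma (↑(k + 1) : ℝ) = k ! := by
    rw [Nat.cast_succ, Gamma_nat_eq_factorial]
  have h2 : (1 : ℝ) < 2 ^ (k + 1) := one_lt_pow₀ one_lt_two (by omega)
  rw [hζ, Nat.add_sub_cancel, polygamma_eq_realHurwitzZeta (by omega) (by norm_num),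
    dirichletBeta_eq_sub hs, hΓ, show (4 : ℝ) ^ (k + 1) = 2 ^ (k + 1) * 2 ^ (k + 1) by
      rw [← mul_pow]; norm_num]
  field_simp at hζ1 hζhalf ⊢
  rw [eq_div_iff (by linarith), ← pow_mul, (even_two.mul_left _).neg_one_pow]
  linear_combination (2 : ℝ) ^ (k + 1) * hζ1 + hζhalf
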